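/- G₂ acts transitively on associative 3-planes: if (u₁, u₂, u₃) and (v₁, v₂, v₃) are orthonormal triples in ℝ⁷ with φ₀(u₁,u₂,u₃) = 1 and φ₀(v₁,v₂,v₃) = 1, then there exists an invertible linear map A : ℝ⁷ → ℝ⁷ with A*φ₀ = φ₀ and A u_i = v_i for i = 1, 2, 3. In particular, every oriented 3-dimensional subspace calibrated by φ₀ is the image under an element of G₂ of every other such subspace. -/

import Mathlib

open scoped RealInnerProductSpace

noncomputable section

/-- ℝ⁷ with its standard Euclidean inner product. -/
abbrev E7 := EuclideanSpace ℝ (Fin 7)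

/-- The coordinate 3-form dx_i ∧ dx_j ∧ dx_k on ℝ⁷ (indices 0,…,6 for x₁,…,x₇). -/
def tri7 (i j k : Fin 7) (u v w : E7) : ℝ :=
  Matrix.det !![u i, u j, u k; v i, v j, v k; w i, w j, w k]

/-- The G₂ 3-form φ₀ = dx₁₂₃ + dx₁₄₅ + dx₁₆₇ + dx₂₄₆ − dx₂₅₇ − dx₃₄₇ − dx₃₅₆. -/
def phi0 (u v w : E7) : ℝ :=
  tri7 0 1 2 u v w + tri7 0 3 4 u v w + tri7 0 5 6 u v w + tri7 1 3 5 u v w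
    - tri7 1 4 6 u v w - tri7 2 3 6 u v w - tri7 2 4 5 u v w

namespace G2Aux

/-- The 7-dimensional cross product associated to φ₀. -/
def cross (u v : E7) : E7 :=
  (WithLp.equiv 2 (Fin 7 → ℝ)).symm
    ![u 1 * v 2 - u 2 * v 1 + (u 3 * v 4 - u 4 * v 3) + (u 5 * v 6 - u 6 * v 5),
      u 2 * v 0 - u 0 * v 2 + (u 3 * v 5 - u 5 * v 3) - (u 4 * v 6 - u 6 * v 4),
      u 0 * v 1 - u 1 * v 0 - (u 3 * v 6 - u 6 * v 3) - (u 4 * v 5 - u 5 * v 4),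
      u 4 * v 0 - u 0 * v 4 + (u 5 * v 1 - u 1 * v 5) - (u 6 * v 2 - u 2 * v 6),
      u 0 * v 3 - u 3 * v 0 - (u 6 * v 1 - u 1 * v 6) - (u 5 * v 2 - u 2 * v 5),
      u 6 * v 0 - u 0 * v 6 + (u 1 * v 3 - u 3 * v 1) - (u 2 * v 4 - u 4 * v 2),
      u 0 * v 5 - u 5 * v 0 - (u 1 * v 4 - u 4 * v 1) - (u 2 * v 3 - u 3 * v 2)]

@[simp] lemma cross_apply_0 (u v : E7) :
    cross u v 0 = u 1 * v 2 - u 2 * v 1 + (u 3 * v 4 - u 4 * v 3) + (u 5 * v 6 - u 6 * v 5) := rfl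
@[simp] lemma cross_apply_1 (u v : E7) :
    cross u v 1 = u 2 * v 0 - u 0 * v 2 + (u 3 * v 5 - u 5 * v 3) - (u 4 * v 6 - u 6 * v 4) := rfl
@[simp] lemma cross_apply_2 (u v : E7) :
    cross u v 2 = u 0 * v 1 - u 1 * v 0 - (u 3 * v 6 - u 6 * v 3) - (u 4 * v 5 - u 5 * v 4) := rfl
@[simp] lemma cross_apply_3 (u v : E7) :
    cross u v 3 = u 4 * v 0 - u 0 * v 4 + (u 5 * v 1 - u 1 * v 5) - (u 6 * v 2 - u 2 * v 6) := rfl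
@[simp] lemma cross_apply_4 (u v : E7) :
    cross u v 4 = u 0 * v 3 - u 3 * v 0 - (u 6 * v 1 - u 1 * v 6) - (u 5 * v 2 - u 2 * v 5) := rfl
@[simp] lemma cross_apply_5 (u v : E7) :
    cross u v 5 = u 6 * v 0 - u 0 * v 6 + (u 1 * v 3 - u 3 * v 1) - (u 2 * v 4 - u 4 * v 2) := rfl
@[simp] lemma cross_apply_6 (u v : E7) :
    cross u v 6 = u 0 * v 5 - u 5 * v 0 - (u 1 * v 4 - u 4 * v 1) - (u 2 * v 3 - u 3 * v 2) := rfl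

lemma inner7 (x y : E7) : ⟪x, y⟫ = x 0 * y 0 + x 1 * y 1 + x 2 * y 2 + x 3 * y 3
    + x 4 * y 4 + x 5 * y 5 + x 6 * y 6 := by
  simp [PiLp.inner_apply, Fin.sum_univ_seven, RCLike.inner_apply, mul_comm]

lemma phi0_expand (u v w : E7) : phi0 u v w = ⟪cross u v, w⟫ := by
  rw [inner7]
  simp [phi0, tri7, Matrix.det_fin_three]
  ring

/-- Bilinearity of the cross product. -/
def crossL : E7 →ₗ[ℝ] E7 →ₗ[ℝ] E7 :=
  LinearMap.mk₂ ℝ cross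
    (fun x y z => by
      ext k; fin_cases k <;>
        simp [PiLp.add_apply] <;> ring)
    (fun r x y => by
      ext k; fin_cases k <;>
        simp [PiLp.smul_apply, smul_eq_mul] <;> ring)
    (fun x y z => by
      ext k; fin_cases k <;>
        simp [PiLp.add_apply] <;> ring)
    (fun r x y => by
      ext k; fin_cases k <;>
        simp [PiLp.smul_apply, smul_eq_mul] <;> ring)

@[simp] lemma crossL_apply (u v : E7) : crossL u v = cross u v := rfl

lemma cross_neg_right (u v : E7) : cross u (-v) = -cross u v := by
  simpa using (crossL u).map_neg v

lemma cross_zero_right (u : E7) : cross u 0 = 0 := by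
  simpa using (crossL u).map_zero

lemma crossSelf (u : E7) : cross u u = 0 := by
  ext k; fin_cases k <;> simp <;> ring

lemma cross_swap (u v : E7) : cross u v = - cross v u := by
  ext k; fin_cases k <;> simp [PiLp.neg_apply] <;> ring

lemma L3 (u v : E7) : cross u (cross u v) = ⟪u,v⟫ • u - ⟪u,u⟫ • v := by
  rw [inner7 u v, inner7 u u]
  ext k; fin_cases k <;>
    simp [PiLp.sub_apply, PiLp.smul_apply, inner7, Fin.sum_univ_seven, smul_eq_mul] <;> ring

lemma L4 (u v w : E7) : cross u (cross v w) + cross v (cross u w)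
    = ⟪u,w⟫ • v + ⟪v,w⟫ • u - (2*⟪u,v⟫) • w := by
  ext k; fin_cases k <;>
    simp [PiLp.sub_apply, PiLp.add_apply, PiLp.smul_apply, inner7, Fin.sum_univ_seven,
      smul_eq_mul] <;> ring

lemma L4' (u v w : E7) : cross u (cross v w)
    = ⟪u,w⟫ • v + ⟪v,w⟫ • u - (2*⟪u,v⟫) • w - cross v (cross u w) :=
  eq_sub_of_add_eq (L4 u v w)

lemma L5 (u v : E7) : ⟪cross u v, cross u v⟫ = ⟪u,u⟫*⟪v,v⟫ - ⟪u,v⟫^2 := by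
  simp only [inner7]; simp; ring

lemma L6 (u v w : E7) : ⟪cross u v, cross u w⟫ = ⟪u,u⟫*⟪v,w⟫ - ⟪u,v⟫*⟪u,w⟫ := by
  simp only [inner7]; simp; ring

lemma L6' (u v w : E7) : ⟪cross u w, cross v w⟫ = ⟪u,v⟫*⟪w,w⟫ - ⟪u,w⟫*⟪v,w⟫ := by
  simp only [inner7]; simp; ring

lemma inner_cross_left (u v : E7) : ⟪cross u v, u⟫ = 0 := by
  simp only [inner7]; simp; ring

lemma inner_cross_right (u v : E7) : ⟪cross u v, v⟫ = 0 := by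
  simp only [inner7]; simp; ring

lemma inner_cross_left' (u v : E7) : ⟪u, cross u v⟫ = 0 := by
  simp only [inner7]; simp; ring

lemma inner_cross_right' (u v : E7) : ⟪v, cross u v⟫ = 0 := by
  simp only [inner7]; simp; ring

lemma icycle (u v w : E7) : ⟪cross u v, w⟫ = ⟪cross v w, u⟫ := by
  simp only [inner7]; simp; ring

end G2Aux
namespace G2Aux

/-- The adapted basis built from an admissible triple `(a,b,c)`. -/
def Fv (a b c : E7) : Fin 7 → E7 :=
  ![a, b, cross a b, c, cross a c, cross b c, cross a (cross b c)]

/-- The linear map sending the standard basis to the adapted basis. -/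
def Amap (a b c : E7) : E7 →ₗ[ℝ] E7 :=
  (PiLp.basisFun 2 ℝ (Fin 7)).constr ℝ (Fv a b c)

lemma Amap_apply (a b c x : E7) : Amap a b c x = ∑ i, x i • Fv a b c i := by
  rw [Amap, Module.Basis.constr_apply_fintype]
  simp [PiLp.basisFun_repr]

lemma Amap_single (a b c : E7) (i : Fin 7) :
    Amap a b c (EuclideanSpace.single i 1) = Fv a b c i := by
  have h : (EuclideanSpace.single i (1:ℝ)) = PiLp.basisFun 2 ℝ (Fin 7) i := by
    rw [PiLp.basisFun_apply]
  rw [h, Amap, Module.Basis.constr_basis]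

lemma ce01 : cross (EuclideanSpace.single 0 1) (EuclideanSpace.single 1 1) = (EuclideanSpace.single 2 (1:ℝ)) := by
  ext k; fin_cases k <;> simp [cross, EuclideanSpace.single_apply, PiLp.neg_apply] <;> rfl

lemma ce02 : cross (EuclideanSpace.single 0 1) (EuclideanSpace.single 2 1) = -(EuclideanSpace.single 1 (1:ℝ)) := by
  ext k; fin_cases k <;> simp [cross, EuclideanSpace.single_apply, PiLp.neg_apply] <;> rfl

lemma ce03 : cross (EuclideanSpace.single 0 1) (EuclideanSpace.single 3 1) = (EuclideanSpace.single 4 (1:ℝ)) := by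
  ext k; fin_cases k <;> simp [cross, EuclideanSpace.single_apply, PiLp.neg_apply] <;> rfl

lemma ce04 : cross (EuclideanSpace.single 0 1) (EuclideanSpace.single 4 1) = -(EuclideanSpace.single 3 (1:ℝ)) := by
  ext k; fin_cases k <;> simp [cross, EuclideanSpace.single_apply, PiLp.neg_apply] <;> rfl

lemma ce05 : cross (EuclideanSpace.single 0 1) (EuclideanSpace.single 5 1) = (EuclideanSpace.single 6 (1:ℝ)) := by
  ext k; fin_cases k <;> simp [cross, EuclideanSpace.single_apply, PiLp.neg_apply] <;> rfl

lemma ce06 : cross (EuclideanSpace.single 0 1) (EuclideanSpace.single 6 1) = -(EuclideanSpace.single 5 (1:ℝ)) := by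
  ext k; fin_cases k <;> simp [cross, EuclideanSpace.single_apply, PiLp.neg_apply] <;> rfl

lemma ce12 : cross (EuclideanSpace.single 1 1) (EuclideanSpace.single 2 1) = (EuclideanSpace.single 0 (1:ℝ)) := by
  ext k; fin_cases k <;> simp [cross, EuclideanSpace.single_apply, PiLp.neg_apply] <;> rfl

lemma ce13 : cross (EuclideanSpace.single 1 1) (EuclideanSpace.single 3 1) = (EuclideanSpace.single 5 (1:ℝ)) := by
  ext k; fin_cases k <;> simp [cross, EuclideanSpace.single_apply, PiLp.neg_apply] <;> rfl

lemma ce14 : cross (EuclideanSpace.single 1 1) (EuclideanSpace.single 4 1) = -(EuclideanSpace.single 6 (1:ℝ)) := by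
  ext k; fin_cases k <;> simp [cross, EuclideanSpace.single_apply, PiLp.neg_apply] <;> rfl

lemma ce15 : cross (EuclideanSpace.single 1 1) (EuclideanSpace.single 5 1) = -(EuclideanSpace.single 3 (1:ℝ)) := by
  ext k; fin_cases k <;> simp [cross, EuclideanSpace.single_apply, PiLp.neg_apply] <;> rfl

lemma ce16 : cross (EuclideanSpace.single 1 1) (EuclideanSpace.single 6 1) = (EuclideanSpace.single 4 (1:ℝ)) := by
  ext k; fin_cases k <;> simp [cross, EuclideanSpace.single_apply, PiLp.neg_apply] <;> rfl

lemma ce23 : cross (EuclideanSpace.single 2 1) (EuclideanSpace.single 3 1) = -(EuclideanSpace.single 6 (1:ℝ)) := by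
  ext k; fin_cases k <;> simp [cross, EuclideanSpace.single_apply, PiLp.neg_apply] <;> rfl

lemma ce24 : cross (EuclideanSpace.single 2 1) (EuclideanSpace.single 4 1) = -(EuclideanSpace.single 5 (1:ℝ)) := by
  ext k; fin_cases k <;> simp [cross, EuclideanSpace.single_apply, PiLp.neg_apply] <;> rfl

lemma ce25 : cross (EuclideanSpace.single 2 1) (EuclideanSpace.single 5 1) = (EuclideanSpace.single 4 (1:ℝ)) := by
  ext k; fin_cases k <;> simp [cross, EuclideanSpace.single_apply, PiLp.neg_apply] <;> rfl

lemma ce26 : cross (EuclideanSpace.single 2 1) (EuclideanSpace.single 6 1) = (EuclideanSpace.single 3 (1:ℝ)) := by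
  ext k; fin_cases k <;> simp [cross, EuclideanSpace.single_apply, PiLp.neg_apply] <;> rfl

lemma ce34 : cross (EuclideanSpace.single 3 1) (EuclideanSpace.single 4 1) = (EuclideanSpace.single 0 (1:ℝ)) := by
  ext k; fin_cases k <;> simp [cross, EuclideanSpace.single_apply, PiLp.neg_apply] <;> rfl

lemma ce35 : cross (EuclideanSpace.single 3 1) (EuclideanSpace.single 5 1) = (EuclideanSpace.single 1 (1:ℝ)) := by
  ext k; fin_cases k <;> simp [cross, EuclideanSpace.single_apply, PiLp.neg_apply] <;> rfl

lemma ce36 : cross (EuclideanSpace.single 3 1) (EuclideanSpace.single 6 1) = -(EuclideanSpace.single 2 (1:ℝ)) := by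
  ext k; fin_cases k <;> simp [cross, EuclideanSpace.single_apply, PiLp.neg_apply] <;> rfl

lemma ce45 : cross (EuclideanSpace.single 4 1) (EuclideanSpace.single 5 1) = -(EuclideanSpace.single 2 (1:ℝ)) := by
  ext k; fin_cases k <;> simp [cross, EuclideanSpace.single_apply, PiLp.neg_apply] <;> rfl

lemma ce46 : cross (EuclideanSpace.single 4 1) (EuclideanSpace.single 6 1) = -(EuclideanSpace.single 1 (1:ℝ)) := by
  ext k; fin_cases k <;> simp [cross, EuclideanSpace.single_apply, PiLp.neg_apply] <;> rfl

lemma ce56 : cross (EuclideanSpace.single 5 1) (EuclideanSpace.single 6 1) = (EuclideanSpace.single 0 (1:ℝ)) := by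
  ext k; fin_cases k <;> simp [cross, EuclideanSpace.single_apply, PiLp.neg_apply] <;> rfl

end G2Aux
namespace G2Aux

section Key

variable {a b c : E7} (ha : ⟪a,a⟫ = 1) (hb : ⟪b,b⟫ = 1) (hc : ⟪c,c⟫ = 1)
  (hab : ⟪a,b⟫ = 0) (hac : ⟪a,c⟫ = 0) (hbc : ⟪b,c⟫ = 0) (habc : ⟪cross a b, c⟫ = 0)

include ha hb hc hab hac hbc habc

lemma key_inner (i j : Fin 7) :
    ⟪Fv a b c i, Fv a b c j⟫ = if i = j then (1:ℝ) else 0 := by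
  have hba : ⟪b,a⟫ = 0 := by rw [real_inner_comm]; exact hab
  have hca : ⟪c,a⟫ = 0 := by rw [real_inner_comm]; exact hac
  have hcb : ⟪c,b⟫ = 0 := by rw [real_inner_comm]; exact hbc
  have icp : ⟪c, cross a b⟫ = 0 := by rw [real_inner_comm]; exact habc
  have iar : ⟪a, cross b c⟫ = 0 := by
    rw [real_inner_comm, icycle, icycle]; exact habc
  have ira : ⟪cross b c, a⟫ = 0 := by rw [real_inner_comm]; exact iar
  have ipp : ⟪cross a b, cross a b⟫ = 1 := by rw [L5, ha, hb, hab]; norm_num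
  have iqq : ⟪cross a c, cross a c⟫ = 1 := by rw [L5, ha, hc, hac]; norm_num
  have irr : ⟪cross b c, cross b c⟫ = 1 := by rw [L5, hb, hc, hbc]; norm_num
  have iss : ⟪cross a (cross b c), cross a (cross b c)⟫ = 1 := by
    rw [L5, ha, irr, iar]; norm_num
  have hcp : cross c (cross a b) = cross a (cross b c) := by
    rw [L4' c a b, hcb, hab, hca, cross_swap c b, cross_neg_right]; simp
  have iap : ⟪a, cross a b⟫ = 0 := inner_cross_left' a b
  have ibp : ⟪b, cross a b⟫ = 0 := inner_cross_right' a b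
  have iaq : ⟪a, cross a c⟫ = 0 := inner_cross_left' a c
  have icq : ⟪c, cross a c⟫ = 0 := inner_cross_right' a c
  have ibr : ⟪b, cross b c⟫ = 0 := inner_cross_left' b c
  have icr : ⟪c, cross b c⟫ = 0 := inner_cross_right' b c
  have ias : ⟪a, cross a (cross b c)⟫ = 0 := inner_cross_left' a (cross b c)
  have irs : ⟪cross b c, cross a (cross b c)⟫ = 0 := inner_cross_right' a (cross b c)
  have iqb : ⟪cross a c, b⟫ = 0 := by
    rw [icycle, icycle, cross_swap b a, inner_neg_left, habc]; norm_num
  have ibq : ⟪b, cross a c⟫ = 0 := by rw [real_inner_comm]; exact iqb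
  have h15 : cross b (cross b c) = -c := by rw [L3, hbc, hb]; simp
  have ibs : ⟪b, cross a (cross b c)⟫ = 0 := by
    rw [real_inner_comm, icycle, cross_swap (cross b c) b, inner_neg_left, h15,
      inner_neg_left, neg_neg, hca]
  have ics : ⟪c, cross a (cross b c)⟫ = 0 := by
    rw [← hcp]; exact inner_cross_left' c (cross a b)
  have ipq : ⟪cross a b, cross a c⟫ = 0 := by rw [L6, ha, hbc, hab, hac]; ring
  have ipr : ⟪cross a b, cross b c⟫ = 0 := by
    rw [cross_swap a b, inner_neg_left, L6, hb, hac, hba, hbc]; ring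
  have ips : ⟪cross a b, cross a (cross b c)⟫ = 0 := by
    rw [← hcp]; exact inner_cross_right' c (cross a b)
  have iqr : ⟪cross a c, cross b c⟫ = 0 := by rw [L6', hab, hac, hbc]; ring
  have iqs : ⟪cross a c, cross a (cross b c)⟫ = 0 := by
    rw [L6, ha, hac, icr, iar]; ring
  have e20 : ⟪cross a b, a⟫ = 0 := inner_cross_left a b
  have e21 : ⟪cross a b, b⟫ = 0 := inner_cross_right a b
  have e40 : ⟪cross a c, a⟫ = 0 := inner_cross_left a c
  have e43 : ⟪cross a c, c⟫ = 0 := inner_cross_right a c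
  have e51 : ⟪cross b c, b⟫ = 0 := inner_cross_left b c
  have e53 : ⟪cross b c, c⟫ = 0 := inner_cross_right b c
  have e60 : ⟪cross a (cross b c), a⟫ = 0 := inner_cross_left a (cross b c)
  have e65 : ⟪cross a (cross b c), cross b c⟫ = 0 := inner_cross_right a (cross b c)
  have e61 : ⟪cross a (cross b c), b⟫ = 0 := by rw [real_inner_comm]; exact ibs
  have e63 : ⟪cross a (cross b c), c⟫ = 0 := by rw [real_inner_comm]; exact ics
  have e62 : ⟪cross a (cross b c), cross a b⟫ = 0 := by rw [real_inner_comm]; exact ips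
  have e64 : ⟪cross a (cross b c), cross a c⟫ = 0 := by rw [real_inner_comm]; exact iqs
  have e42 : ⟪cross a c, cross a b⟫ = 0 := by rw [real_inner_comm]; exact ipq
  have e52 : ⟪cross b c, cross a b⟫ = 0 := by rw [real_inner_comm]; exact ipr
  have e54 : ⟪cross b c, cross a c⟫ = 0 := by rw [real_inner_comm]; exact iqr
  fin_cases i <;> fin_cases j
  · exact ha
  · exact hab
  · exact iap
  · exact hac
  · exact iaq
  · exact iar
  · exact ias
  · exact hba
  · exact hb
  · exact ibp
  · exact hbc
  · exact ibq
  · exact ibr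
  · exact ibs
  · exact e20
  · exact e21
  · exact ipp
  · exact habc
  · exact ipq
  · exact ipr
  · exact ips
  · exact hca
  · exact hcb
  · exact icp
  · exact hc
  · exact icq
  · exact icr
  · exact ics
  · exact e40
  · exact iqb
  · exact e42
  · exact e43
  · exact iqq
  · exact iqr
  · exact iqs
  · exact ira
  · exact e51
  · exact e52
  · exact e53
  · exact e54
  · exact irr
  · exact irs
  · exact e60
  · exact e61
  · exact e62
  · exact e63
  · exact e64
  · exact e65
  · exact iss

lemma key_cross (i j : Fin 7) :
    cross (Fv a b c i) (Fv a b c j)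
      = Amap a b c (cross (EuclideanSpace.single i 1) (EuclideanSpace.single j 1)) := by
  have hba : ⟪b,a⟫ = 0 := by rw [real_inner_comm]; exact hab
  have hca : ⟪c,a⟫ = 0 := by rw [real_inner_comm]; exact hac
  have hcb : ⟪c,b⟫ = 0 := by rw [real_inner_comm]; exact hbc
  have icp : ⟪c, cross a b⟫ = 0 := by rw [real_inner_comm]; exact habc
  have iar : ⟪a, cross b c⟫ = 0 := by
    rw [real_inner_comm, icycle, icycle]; exact habc
  have ira : ⟪cross b c, a⟫ = 0 := by rw [real_inner_comm]; exact iar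
  have ipa : ⟪cross a b, a⟫ = 0 := inner_cross_left a b
  have ipb : ⟪cross a b, b⟫ = 0 := inner_cross_right a b
  have iqa : ⟪cross a c, a⟫ = 0 := inner_cross_left a c
  have iqc : ⟪cross a c, c⟫ = 0 := inner_cross_right a c
  have ibr : ⟪b, cross b c⟫ = 0 := inner_cross_left' b c
  have ipp : ⟪cross a b, cross a b⟫ = 1 := by rw [L5, ha, hb, hab]; norm_num
  have irr : ⟪cross b c, cross b c⟫ = 1 := by rw [L5, hb, hc, hbc]; norm_num
  have iqb : ⟪cross a c, b⟫ = 0 := by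
    rw [icycle, icycle, cross_swap b a, inner_neg_left, habc]; norm_num
  have iqr : ⟪cross a c, cross b c⟫ = 0 := by rw [L6', hab, hac, hbc]; ring
  -- the multiplication table
  have h02 : cross a (cross a b) = -b := by rw [L3, hab, ha]; simp
  have h04 : cross a (cross a c) = -c := by rw [L3, hac, ha]; simp
  have h12 : cross b (cross a b) = a := by
    rw [cross_swap a b, cross_neg_right, L3, hba, hb]; simp
  have h34 : cross c (cross a c) = a := by
    rw [cross_swap a c, cross_neg_right, L3, hca, hc]; simp
  have h15 : cross b (cross b c) = -c := by rw [L3, hbc, hb]; simp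
  have h35 : cross c (cross b c) = b := by
    rw [cross_swap b c, cross_neg_right, L3, hcb, hc]; simp
  have h14 : cross b (cross a c) = -(cross a (cross b c)) := by
    rw [L4' b a c, hbc, hac, hba]; simp
  have hcp : cross c (cross a b) = cross a (cross b c) := by
    rw [L4' c a b, hcb, hab, hca, cross_swap c b, cross_neg_right]; simp
  have h06 : cross a (cross a (cross b c)) = -(cross b c) := by
    rw [L3, iar, ha]; simp
  have h16 : cross b (cross a (cross b c)) = cross a c := by
    rw [L4' b a (cross b c), ibr, iar, hba, h15, cross_neg_right]; simp
  have h23 : cross (cross a b) c = -(cross a (cross b c)) := by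
    rw [cross_swap (cross a b) c, hcp]
  have h24 : cross (cross a b) (cross a c) = -(cross b c) := by
    rw [L4' (cross a b) a c, habc, hac, ipa, h23, cross_neg_right, h06]; simp
  have h25 : cross (cross a b) (cross b c) = cross a c := by
    rw [L4' (cross a b) b c, habc, hbc, ipb, h23, cross_neg_right, h16]; simp
  have h26 : cross (cross a b) (cross a (cross b c)) = c := by
    rw [← hcp, cross_swap c (cross a b), cross_neg_right, L3, habc, ipp]; simp
  have h36 : cross c (cross a (cross b c)) = -(cross a b) := by
    rw [← hcp, L3, icp, hc]; simp
  have h45 : cross (cross a c) (cross b c) = -(cross a b) := by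
    rw [L4' (cross a c) b c, iqc, hbc, iqb, cross_swap (cross a c) c,
      cross_neg_right, h34, cross_swap b a]; simp
  have h46 : cross (cross a c) (cross a (cross b c)) = -b := by
    rw [L4' (cross a c) a (cross b c), iqr, iar, iqa, h45, cross_neg_right, h02]; simp
  have h56 : cross (cross b c) (cross a (cross b c)) = a := by
    rw [L4' (cross b c) a (cross b c), irr, iar, ira, crossSelf, cross_zero_right]; simp
  -- assemble
  have st : ∀ {x y z w : E7}, cross x y = Amap a b c (cross z w) →
      cross y x = Amap a b c (cross w z) := by
    intro x y z w h
    rw [cross_swap y x, cross_swap w z, map_neg, h]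
  have kd : ∀ (x : E7) (l : Fin 7), cross x x
      = Amap a b c (cross (EuclideanSpace.single l 1) (EuclideanSpace.single l 1)) := by
    intro x l; rw [crossSelf, crossSelf, map_zero]
  have k01 : cross a b = Amap a b c (cross (EuclideanSpace.single 0 1) (EuclideanSpace.single 1 1)) := by
    rw [ce01, Amap_single]; rfl
  have k02 : cross a (cross a b) = Amap a b c (cross (EuclideanSpace.single 0 1) (EuclideanSpace.single 2 1)) := by
    rw [ce02, map_neg, Amap_single, h02]; rfl
  have k03 : cross a c = Amap a b c (cross (EuclideanSpace.single 0 1) (EuclideanSpace.single 3 1)) := by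
    rw [ce03, Amap_single]; rfl
  have k04 : cross a (cross a c) = Amap a b c (cross (EuclideanSpace.single 0 1) (EuclideanSpace.single 4 1)) := by
    rw [ce04, map_neg, Amap_single, h04]; rfl
  have k05 : cross a (cross b c) = Amap a b c (cross (EuclideanSpace.single 0 1) (EuclideanSpace.single 5 1)) := by
    rw [ce05, Amap_single]; rfl
  have k06 : cross a (cross a (cross b c)) = Amap a b c (cross (EuclideanSpace.single 0 1) (EuclideanSpace.single 6 1)) := by
    rw [ce06, map_neg, Amap_single, h06]; rfl
  have k12 : cross b (cross a b) = Amap a b c (cross (EuclideanSpace.single 1 1) (EuclideanSpace.single 2 1)) := by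
    rw [ce12, Amap_single, h12]; rfl
  have k13 : cross b c = Amap a b c (cross (EuclideanSpace.single 1 1) (EuclideanSpace.single 3 1)) := by
    rw [ce13, Amap_single]; rfl
  have k14 : cross b (cross a c) = Amap a b c (cross (EuclideanSpace.single 1 1) (EuclideanSpace.single 4 1)) := by
    rw [ce14, map_neg, Amap_single, h14]; rfl
  have k15 : cross b (cross b c) = Amap a b c (cross (EuclideanSpace.single 1 1) (EuclideanSpace.single 5 1)) := by
    rw [ce15, map_neg, Amap_single, h15]; rfl
  have k16 : cross b (cross a (cross b c)) = Amap a b c (cross (EuclideanSpace.single 1 1) (EuclideanSpace.single 6 1)) := by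
    rw [ce16, Amap_single, h16]; rfl
  have k23 : cross (cross a b) c = Amap a b c (cross (EuclideanSpace.single 2 1) (EuclideanSpace.single 3 1)) := by
    rw [ce23, map_neg, Amap_single, h23]; rfl
  have k24 : cross (cross a b) (cross a c) = Amap a b c (cross (EuclideanSpace.single 2 1) (EuclideanSpace.single 4 1)) := by
    rw [ce24, map_neg, Amap_single, h24]; rfl
  have k25 : cross (cross a b) (cross b c) = Amap a b c (cross (EuclideanSpace.single 2 1) (EuclideanSpace.single 5 1)) := by
    rw [ce25, Amap_single, h25]; rfl
  have k26 : cross (cross a b) (cross a (cross b c)) = Amap a b c (cross (EuclideanSpace.single 2 1) (EuclideanSpace.single 6 1)) := by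
    rw [ce26, Amap_single, h26]; rfl
  have k34 : cross c (cross a c) = Amap a b c (cross (EuclideanSpace.single 3 1) (EuclideanSpace.single 4 1)) := by
    rw [ce34, Amap_single, h34]; rfl
  have k35 : cross c (cross b c) = Amap a b c (cross (EuclideanSpace.single 3 1) (EuclideanSpace.single 5 1)) := by
    rw [ce35, Amap_single, h35]; rfl
  have k36 : cross c (cross a (cross b c)) = Amap a b c (cross (EuclideanSpace.single 3 1) (EuclideanSpace.single 6 1)) := by
    rw [ce36, map_neg, Amap_single, h36]; rfl
  have k45 : cross (cross a c) (cross b c) = Amap a b c (cross (EuclideanSpace.single 4 1) (EuclideanSpace.single 5 1)) := by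
    rw [ce45, map_neg, Amap_single, h45]; rfl
  have k46 : cross (cross a c) (cross a (cross b c)) = Amap a b c (cross (EuclideanSpace.single 4 1) (EuclideanSpace.single 6 1)) := by
    rw [ce46, map_neg, Amap_single, h46]; rfl
  have k56 : cross (cross b c) (cross a (cross b c)) = Amap a b c (cross (EuclideanSpace.single 5 1) (EuclideanSpace.single 6 1)) := by
    rw [ce56, Amap_single, h56]; rfl
  fin_cases i <;> fin_cases j
  · exact kd _ _
  · exact k01
  · exact k02
  · exact k03
  · exact k04
  · exact k05
  · exact k06
  · exact st k01
  · exact kd _ _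
  · exact k12
  · exact k13
  · exact k14
  · exact k15
  · exact k16
  · exact st k02
  · exact st k12
  · exact kd _ _
  · exact k23
  · exact k24
  · exact k25
  · exact k26
  · exact st k03
  · exact st k13
  · exact st k23
  · exact kd _ _
  · exact k34
  · exact k35
  · exact k36
  · exact st k04
  · exact st k14
  · exact st k24
  · exact st k34
  · exact kd _ _
  · exact k45
  · exact k46
  · exact st k05
  · exact st k15
  · exact st k25
  · exact st k35
  · exact st k45
  · exact kd _ _
  · exact k56
  · exact st k06
  · exact st k16
  · exact st k26
  · exact st k36
  · exact st k46
  · exact st k56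
  · exact kd _ _

end Key

end G2Aux
namespace G2Aux

section Key2

variable {a b c : E7} (ha : ⟪a,a⟫ = 1) (hb : ⟪b,b⟫ = 1) (hc : ⟪c,c⟫ = 1)
  (hab : ⟪a,b⟫ = 0) (hac : ⟪a,c⟫ = 0) (hbc : ⟪b,c⟫ = 0) (habc : ⟪cross a b, c⟫ = 0)

include ha hb hc hab hac hbc habc

lemma Amap_inner (x y : E7) : ⟪Amap a b c x, Amap a b c y⟫ = ⟪x, y⟫ := by
  rw [Amap_apply, Amap_apply, sum_inner]
  simp_rw [inner_sum, real_inner_smul_left, real_inner_smul_right,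
    key_inner ha hb hc hab hac hbc habc]
  simp_rw [mul_ite, mul_one, mul_zero, Finset.sum_ite_eq, Finset.mem_univ, if_true]
  rw [PiLp.inner_apply]
  simp [RCLike.inner_apply, mul_comm]

lemma Amap_bijective : Function.Bijective (Amap a b c) := by
  have hinj : Function.Injective (Amap a b c) := by
    rw [← LinearMap.ker_eq_bot, Submodule.eq_bot_iff]
    intro x hx
    rw [LinearMap.mem_ker] at hx
    have h1 : ⟪x, x⟫ = (0:ℝ) := by
      rw [← Amap_inner ha hb hc hab hac hbc habc x x, hx, inner_zero_left]
    exact inner_self_eq_zero.mp h1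
  exact ⟨hinj, LinearMap.injective_iff_surjective.mp hinj⟩

lemma Amap_cross_eq (x y : E7) :
    cross (Amap a b c x) (Amap a b c y) = Amap a b c (cross x y) := by
  have hb1 : ∀ i : Fin 7, (PiLp.basisFun 2 ℝ (Fin 7)) i = EuclideanSpace.single i 1 := by
    intro i; rw [PiLp.basisFun_apply]
  have hext : (crossL.compl₁₂ (Amap a b c) (Amap a b c)) = crossL.compr₂ (Amap a b c) := by
    apply LinearMap.ext_basis (PiLp.basisFun 2 ℝ (Fin 7)) (PiLp.basisFun 2 ℝ (Fin 7))
    intro i j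
    simp only [LinearMap.compl₁₂_apply, LinearMap.compr₂_apply, crossL_apply, hb1,
      Amap_single]
    exact key_cross ha hb hc hab hac hbc habc i j
  have h2 := LinearMap.congr_fun (LinearMap.congr_fun hext x) y
  simpa using h2

lemma Amap_phi0 (x y z : E7) :
    phi0 (Amap a b c x) (Amap a b c y) (Amap a b c z) = phi0 x y z := by
  rw [phi0_expand, phi0_expand, Amap_cross_eq ha hb hc hab hac hbc habc,
    Amap_inner ha hb hc hab hac hbc habc]

end Key2

end G2Aux

open G2Aux

/-- G₂ acts transitively on associative 3-planes: any two orthonormal triples calibrated by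
φ₀ are related by an invertible linear map preserving φ₀. -/
theorem g2_transitive_on_associative_planes
    (u₁ u₂ u₃ v₁ v₂ v₃ : E7)
    (hu : Orthonormal ℝ ![u₁, u₂, u₃]) (hv : Orthonormal ℝ ![v₁, v₂, v₃])
    (hu1 : phi0 u₁ u₂ u₃ = 1) (hv1 : phi0 v₁ v₂ v₃ = 1) :
    ∃ A : E7 →ₗ[ℝ] E7, Function.Bijective A ∧
      (∀ x y z : E7, phi0 (A x) (A y) (A z) = phi0 x y z) ∧
      A u₁ = v₁ ∧ A u₂ = v₂ ∧ A u₃ = v₃ := by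
  classical
  -- orthonormality data
  have hhu := orthonormal_iff_ite.mp hu
  have hhv := orthonormal_iff_ite.mp hv
  have hu11 : ⟪u₁,u₁⟫ = (1:ℝ) := by simpa using hhu 0 0
  have hu22 : ⟪u₂,u₂⟫ = (1:ℝ) := by simpa using hhu 1 1
  have hu33 : ⟪u₃,u₃⟫ = (1:ℝ) := by simpa using hhu 2 2
  have hu12 : ⟪u₁,u₂⟫ = (0:ℝ) := by simpa using hhu 0 1
  have hu13 : ⟪u₁,u₃⟫ = (0:ℝ) := by simpa using hhu 0 2
  have hu23 : ⟪u₂,u₃⟫ = (0:ℝ) := by simpa using hhu 1 2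
  have hv11 : ⟪v₁,v₁⟫ = (1:ℝ) := by simpa using hhv 0 0
  have hv22 : ⟪v₂,v₂⟫ = (1:ℝ) := by simpa using hhv 1 1
  have hv33 : ⟪v₃,v₃⟫ = (1:ℝ) := by simpa using hhv 2 2
  have hv12 : ⟪v₁,v₂⟫ = (0:ℝ) := by simpa using hhv 0 1
  have hv13 : ⟪v₁,v₃⟫ = (0:ℝ) := by simpa using hhv 0 2
  have hv23 : ⟪v₂,v₃⟫ = (0:ℝ) := by simpa using hhv 1 2
  -- the third vector is the cross product of the first two
  have hcu : cross u₁ u₂ = u₃ := by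
    have hn : ⟪cross u₁ u₂, cross u₁ u₂⟫ = (1:ℝ) := by
      rw [L5, hu11, hu22, hu12]; norm_num
    have hd : ⟪cross u₁ u₂, u₃⟫ = (1:ℝ) := by rw [← phi0_expand]; exact hu1
    have hdu : ⟪u₃, cross u₁ u₂⟫ = (1:ℝ) := by rw [real_inner_comm]; exact hd
    have hz : ⟪cross u₁ u₂ - u₃, cross u₁ u₂ - u₃⟫ = (0:ℝ) := by
      simp only [inner_sub_left, inner_sub_right, hn, hd, hdu, hu33]; norm_num
    exact sub_eq_zero.mp (inner_self_eq_zero.mp hz)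
  have hcv : cross v₁ v₂ = v₃ := by
    have hn : ⟪cross v₁ v₂, cross v₁ v₂⟫ = (1:ℝ) := by
      rw [L5, hv11, hv22, hv12]; norm_num
    have hd : ⟪cross v₁ v₂, v₃⟫ = (1:ℝ) := by rw [← phi0_expand]; exact hv1
    have hdv : ⟪v₃, cross v₁ v₂⟫ = (1:ℝ) := by rw [real_inner_comm]; exact hd
    have hz : ⟪cross v₁ v₂ - v₃, cross v₁ v₂ - v₃⟫ = (0:ℝ) := by
      simp only [inner_sub_left, inner_sub_right, hn, hd, hdv, hv33]; norm_num
    exact sub_eq_zero.mp (inner_self_eq_zero.mp hz)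
  -- pick unit vectors orthogonal to the triples
  have hexists : ∀ w₁ w₂ w₃ : E7, ∃ z : E7, ⟪z,z⟫ = (1:ℝ) ∧
      ⟪w₁,z⟫ = 0 ∧ ⟪w₂,z⟫ = 0 ∧ ⟪w₃,z⟫ = 0 := by
    intro w₁ w₂ w₃
    let L : E7 →ₗ[ℝ] ℝ × ℝ × ℝ :=
      ((innerSL ℝ w₁).toLinearMap).prod
        (((innerSL ℝ w₂).toLinearMap).prod ((innerSL ℝ w₃).toLinearMap))
    have hlt : Module.finrank ℝ (ℝ × ℝ × ℝ) < Module.finrank ℝ E7 := by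
      simp [finrank_euclideanSpace_fin]
    have hker : LinearMap.ker L ≠ ⊥ := LinearMap.ker_ne_bot_of_finrank_lt hlt
    obtain ⟨w, hwmem, hwne⟩ := Submodule.ne_bot_iff _ |>.mp hker
    rw [LinearMap.mem_ker] at hwmem
    have hw1 : ⟪w₁, w⟫ = 0 := congrArg Prod.fst hwmem
    have hw2 : ⟪w₂, w⟫ = 0 := congrArg Prod.fst (congrArg Prod.snd hwmem)
    have hw3 : ⟪w₃, w⟫ = 0 := congrArg Prod.snd (congrArg Prod.snd hwmem)
    have hnw : ‖w‖ ≠ 0 := norm_ne_zero_iff.mpr hwne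
    refine ⟨‖w‖⁻¹ • w, ?_, ?_, ?_, ?_⟩
    · rw [real_inner_smul_left, real_inner_smul_right, real_inner_self_eq_norm_mul_norm]
      field_simp
    · rw [real_inner_smul_right, hw1, mul_zero]
    · rw [real_inner_smul_right, hw2, mul_zero]
    · rw [real_inner_smul_right, hw3, mul_zero]
  obtain ⟨p, hpp, hp1, hp2, hp3⟩ := hexists u₁ u₂ u₃
  obtain ⟨q, hqq, hq1, hq2, hq3⟩ := hexists v₁ v₂ v₃
  have hup : ⟪cross u₁ u₂, p⟫ = 0 := by rw [hcu]; exact hp3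
  have hvq : ⟪cross v₁ v₂, q⟫ = 0 := by rw [hcv]; exact hq3
  -- the two G₂ elements
  have bu := Amap_bijective hu11 hu22 hpp hu12 hp1 hp2 hup
  have bv := Amap_bijective hv11 hv22 hqq hv12 hq1 hq2 hvq
  let eu : E7 ≃ₗ[ℝ] E7 := LinearEquiv.ofBijective (Amap u₁ u₂ p) bu
  refine ⟨(Amap v₁ v₂ q).comp eu.symm.toLinearMap, ?_, ?_, ?_, ?_, ?_⟩
  · exact bv.comp eu.symm.bijective
  · intro x y z
    simp only [LinearMap.comp_apply, LinearEquiv.coe_coe]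
    rw [Amap_phi0 hv11 hv22 hqq hv12 hq1 hq2 hvq,
      ← Amap_phi0 hu11 hu22 hpp hu12 hp1 hp2 hup (eu.symm x) (eu.symm y) (eu.symm z)]
    have hesu : ∀ t : E7, Amap u₁ u₂ p (eu.symm t) = t := fun t =>
      eu.apply_symm_apply t
    rw [hesu, hesu, hesu]
  · simp only [LinearMap.comp_apply, LinearEquiv.coe_coe]
    have h0 : eu.symm u₁ = EuclideanSpace.single 0 1 := by
      rw [LinearEquiv.symm_apply_eq]
      show u₁ = Amap u₁ u₂ p (EuclideanSpace.single 0 1)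
      rw [Amap_single]; rfl
    rw [h0, Amap_single]; rfl
  · simp only [LinearMap.comp_apply, LinearEquiv.coe_coe]
    have h0 : eu.symm u₂ = EuclideanSpace.single 1 1 := by
      rw [LinearEquiv.symm_apply_eq]
      show u₂ = Amap u₁ u₂ p (EuclideanSpace.single 1 1)
      rw [Amap_single]; rfl
    rw [h0, Amap_single]; rfl
  · simp only [LinearMap.comp_apply, LinearEquiv.coe_coe]
    have h0 : eu.symm u₃ = EuclideanSpace.single 2 1 := by
      rw [LinearEquiv.symm_apply_eq]
      show u₃ = Amap u₁ u₂ p (EuclideanSpace.single 2 1)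
      rw [Amap_single]
      exact hcu.symm
    rw [h0, Amap_single]
    exact hcv
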